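/- Let ξ > 0 be such that D_ξ := DᵀD − ξ²I is invertible, let ω ∈ ℝ, and let a_1,…,a_m ∈ ℂ be arbitrary complex numbers. Define Ã := iωI − A_0 − Σ_{i=1}^m A_i a_i ∈ ℂ^{n×n}, assume Ã is invertible, and set G̃ := C Ã⁻¹ B + D ∈ ℂ^{n_y×n_u}. Define Ĥ := iωI − M_0 − Σ_{i=1}^m (M_i a_i + M_{−i} conj(a_i)) ∈ ℂ^{2n×2n}. Then det(G̃* G̃ − ξ² I) = 0 if and only if det Ĥ = 0; moreover det Ĥ · det D_ξ = det(G̃* G̃ − ξ² I) · det Ã · det(−Ã*). -/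

import Mathlib

open Matrix Complex

noncomputable section

variable {n nu ny m : ℕ}

/-- `D_ξ = Dᵀ D − ξ² I`. -/
def Dxi (D : Matrix (Fin ny) (Fin nu) ℝ) (ξ : ℝ) : Matrix (Fin nu) (Fin nu) ℝ :=
  Dᵀ * D - ξ ^ 2 • (1 : Matrix (Fin nu) (Fin nu) ℝ)

/-- `(Dᵀ)_ξ = D Dᵀ − ξ² I`, the matrix denoted `D_ξ^{-T}`-inverse base in the paper
(the only dimensionally consistent reading of the `(2,1)` block of `M₀`).
Note that it is invertible iff `D_ξ` is (for `ξ ≠ 0`), since `DᵀD` and `DDᵀ` have the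
same nonzero eigenvalues. -/
def DxiT (D : Matrix (Fin ny) (Fin nu) ℝ) (ξ : ℝ) : Matrix (Fin ny) (Fin ny) ℝ :=
  D * Dᵀ - ξ ^ 2 • (1 : Matrix (Fin ny) (Fin ny) ℝ)

/-- The block matrix `M₀`. -/
def Mzero (A0 : Matrix (Fin n) (Fin n) ℝ) (B : Matrix (Fin n) (Fin nu) ℝ)
    (C : Matrix (Fin ny) (Fin n) ℝ) (D : Matrix (Fin ny) (Fin nu) ℝ) (ξ : ℝ) :
    Matrix (Fin n ⊕ Fin n) (Fin n ⊕ Fin n) ℝ :=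
  fromBlocks (A0 - B * (Dxi D ξ)⁻¹ * Dᵀ * C) (-(B * (Dxi D ξ)⁻¹ * Bᵀ))
    (ξ ^ 2 • (Cᵀ * (DxiT D ξ)⁻¹ * C)) (-A0ᵀ + Cᵀ * D * (Dxi D ξ)⁻¹ * Bᵀ)

/-- The block matrix `Mᵢ` for `1 ≤ i ≤ m`. -/
def Mpos (Ai : Matrix (Fin n) (Fin n) ℝ) : Matrix (Fin n ⊕ Fin n) (Fin n ⊕ Fin n) ℝ :=
  fromBlocks Ai 0 0 0

/-- The block matrix `M₋ᵢ` for `1 ≤ i ≤ m`. -/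
def Mneg (Ai : Matrix (Fin n) (Fin n) ℝ) : Matrix (Fin n ⊕ Fin n) (Fin n ⊕ Fin n) ℝ :=
  fromBlocks 0 0 0 (-Aiᵀ)

/-- `H_ξ(λ) = λI − M₀ − Σᵢ (Mᵢ e^{−λτᵢ} + M₋ᵢ e^{λτᵢ})`. -/
def Hxi (A0 : Matrix (Fin n) (Fin n) ℝ) (A : Fin m → Matrix (Fin n) (Fin n) ℝ)
    (B : Matrix (Fin n) (Fin nu) ℝ) (C : Matrix (Fin ny) (Fin n) ℝ)
    (D : Matrix (Fin ny) (Fin nu) ℝ) (τ : Fin m → ℝ) (ξ : ℝ) (lam : ℂ) :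
    Matrix (Fin n ⊕ Fin n) (Fin n ⊕ Fin n) ℂ :=
  lam • (1 : Matrix (Fin n ⊕ Fin n) (Fin n ⊕ Fin n) ℂ)
    - (Mzero A0 B C D ξ).map Complex.ofReal
    - ∑ i : Fin m, (Complex.exp (-lam * (τ i : ℂ)) • (Mpos (A i)).map Complex.ofReal
        + Complex.exp (lam * (τ i : ℂ)) • (Mneg (A i)).map Complex.ofReal)

/-- `A(λ) = λI − A₀ − Σᵢ Aᵢ e^{−λτᵢ}`. -/
def Amat (A0 : Matrix (Fin n) (Fin n) ℝ) (A : Fin m → Matrix (Fin n) (Fin n) ℝ)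
    (τ : Fin m → ℝ) (lam : ℂ) : Matrix (Fin n) (Fin n) ℂ :=
  lam • (1 : Matrix (Fin n) (Fin n) ℂ) - A0.map Complex.ofReal
    - ∑ i : Fin m, Complex.exp (-lam * (τ i : ℂ)) • (A i).map Complex.ofReal

/-- The transfer function `G(λ) = C A(λ)⁻¹ B + D`. -/
def Gmat (A0 : Matrix (Fin n) (Fin n) ℝ) (A : Fin m → Matrix (Fin n) (Fin n) ℝ)
    (B : Matrix (Fin n) (Fin nu) ℝ) (C : Matrix (Fin ny) (Fin n) ℝ)
    (D : Matrix (Fin ny) (Fin nu) ℝ) (τ : Fin m → ℝ) (lam : ℂ) :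
    Matrix (Fin ny) (Fin nu) ℂ :=
  C.map Complex.ofReal * (Amat A0 A τ lam)⁻¹ * B.map Complex.ofReal + D.map Complex.ofReal

/-- `τ_max`, the maximum of the delays. -/
def tauMax [NeZero m] (τ : Fin m → ℝ) : ℝ :=
  Finset.univ.sup' Finset.univ_nonempty τ

/-- `λ` is an eigenvalue of the infinite-dimensional operator `L_ξ`: there is a continuously
differentiable, not identically zero function `u : [−τ_max, τ_max] → ℂ^{2n}` with
`u′(t) = λ u(t)` on the interval and `u′(0) = M₀ u(0) + Σᵢ (Mᵢ u(−τᵢ) + M₋ᵢ u(τᵢ))`. -/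
def IsEigLxi [NeZero m] (A0 : Matrix (Fin n) (Fin n) ℝ) (A : Fin m → Matrix (Fin n) (Fin n) ℝ)
    (B : Matrix (Fin n) (Fin nu) ℝ) (C : Matrix (Fin ny) (Fin n) ℝ)
    (D : Matrix (Fin ny) (Fin nu) ℝ) (τ : Fin m → ℝ) (ξ : ℝ) (lam : ℂ) : Prop :=
  ∃ u : ℝ → (Fin n ⊕ Fin n → ℂ),
    (∀ t ∈ Set.Icc (-(tauMax τ)) (tauMax τ),
      HasDerivWithinAt u (lam • u t) (Set.Icc (-(tauMax τ)) (tauMax τ)) t) ∧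
    (∃ t ∈ Set.Icc (-(tauMax τ)) (tauMax τ), u t ≠ 0) ∧
    lam • u 0 = (Mzero A0 B C D ξ).map Complex.ofReal *ᵥ u 0
      + ∑ i : Fin m, ((Mpos (A i)).map Complex.ofReal *ᵥ u (-(τ i))
          + (Mneg (A i)).map Complex.ofReal *ᵥ u (τ i))


/-- `Ã = iωI − A₀ − Σᵢ Aᵢ aᵢ`. -/
def AmatGen (A0 : Matrix (Fin n) (Fin n) ℝ) (A : Fin m → Matrix (Fin n) (Fin n) ℝ)
    (a : Fin m → ℂ) (ω : ℝ) : Matrix (Fin n) (Fin n) ℂ :=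
  (Complex.I * ω) • (1 : Matrix (Fin n) (Fin n) ℂ) - A0.map Complex.ofReal
    - ∑ i : Fin m, a i • (A i).map Complex.ofReal

/-- `G̃ = C Ã⁻¹ B + D`. -/
def GmatGen (A0 : Matrix (Fin n) (Fin n) ℝ) (A : Fin m → Matrix (Fin n) (Fin n) ℝ)
    (B : Matrix (Fin n) (Fin nu) ℝ) (C : Matrix (Fin ny) (Fin n) ℝ)
    (D : Matrix (Fin ny) (Fin nu) ℝ) (a : Fin m → ℂ) (ω : ℝ) :
    Matrix (Fin ny) (Fin nu) ℂ :=
  C.map Complex.ofReal * (AmatGen A0 A a ω)⁻¹ * B.map Complex.ofReal + D.map Complex.ofReal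

/-- `Ĥ = iωI − M₀ − Σᵢ (Mᵢ aᵢ + M₋ᵢ conj(aᵢ))`. -/
def HhatGen (A0 : Matrix (Fin n) (Fin n) ℝ) (A : Fin m → Matrix (Fin n) (Fin n) ℝ)
    (B : Matrix (Fin n) (Fin nu) ℝ) (C : Matrix (Fin ny) (Fin n) ℝ)
    (D : Matrix (Fin ny) (Fin nu) ℝ) (ξ : ℝ) (a : Fin m → ℂ) (ω : ℝ) :
    Matrix (Fin n ⊕ Fin n) (Fin n ⊕ Fin n) ℂ :=
  (Complex.I * ω) • (1 : Matrix (Fin n ⊕ Fin n) (Fin n ⊕ Fin n) ℂ)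
    - (Mzero A0 B C D ξ).map Complex.ofReal
    - ∑ i : Fin m, (a i • (Mpos (A i)).map Complex.ofReal
        + (starRingEnd ℂ) (a i) • (Mneg (A i)).map Complex.ofReal)

/-!
Since `ξ² (DDᵀ − ξ²I)⁻¹ = D D_ξ⁻¹ Dᵀ − I`, the matrix `Ĥ` splits as `K + P D_ξ⁻¹ Q` with the block
lower-triangular `K = [[Ã, 0], [CᴴC, −Ãᴴ]]`, `P = [B; −CᴴD]` and `Q = [DᴴC, Bᴴ]`. Expanding the
determinant of `[[K, −P], [Q, D_ξ]]` by the Schur complement of either diagonal block gives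
`det Ĥ · det D_ξ = det(D_ξ + Q K⁻¹ P) · det K`. Finally `det K = det Ã · det(−Ãᴴ)`, and
`K⁻¹ = [[Ã⁻¹, 0], [Ã⁻ᴴCᴴCÃ⁻¹, −Ã⁻ᴴ]]` gives `D_ξ + Q K⁻¹ P = G̃ᴴG̃ − ξ²I`.
-/

namespace Matrix

section Schur

variable {p q r R : Type*} [Fintype p] [DecidableEq p] [CommRing R]

theorem det_add_mul_inv_mul_mul_det [Fintype q] [DecidableEq q] {K : Matrix p p R}
    {S : Matrix q q R} (P : Matrix p q R) (Q : Matrix q p R) (hK : IsUnit K) (hS : IsUnit S) :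
    (K + P * S⁻¹ * Q).det * S.det = (S + Q * K⁻¹ * P).det * K.det := by
  have := hK.invertible
  have := hS.invertible
  have h₁₁ := det_fromBlocks₁₁ K (-P) Q S
  have h₂₂ := det_fromBlocks₂₂ K (-P) Q S
  simp only [invOf_eq_nonsing_inv, Matrix.mul_neg, Matrix.neg_mul, sub_neg_eq_add] at h₁₁ h₂₂
  rw [mul_comm, ← h₂₂, h₁₁, mul_comm]

theorem map_nonsing_inv {K L : Type*} [Field K] [Field L] (f : K →+* L) (M : Matrix p p K) :
    M⁻¹.map f = (M.map f)⁻¹ := by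
  simp only [inv_def, Ring.inverse_eq_inv']
  rw [← RingHom.mapMatrix_apply, ← RingHom.mapMatrix_apply, ← RingHom.map_adjugate,
    ← RingHom.map_det, ← map_inv₀]
  ext i j
  simp

variable [StarRing R]

theorem fromCols_mul_inv_fromBlocks_mul_fromRows [Fintype r] {Ã : Matrix p p R} (hÃ : IsUnit Ã)
    (B : Matrix p q R) (C : Matrix r p R) (D : Matrix r q R) :
    fromCols (Dᴴ * C) Bᴴ * (fromBlocks Ã 0 (Cᴴ * C) (-Ãᴴ))⁻¹ * fromRows B (-(Cᴴ * D))
      = (C * Ã⁻¹ * B + D)ᴴ * (C * Ã⁻¹ * B + D) - Dᴴ * D := by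
  have hÃH : IsUnit Ãᴴ := hÃ.star
  have hinv : (-Ãᴴ)⁻¹ = -Ãᴴ⁻¹ := inv_eq_left_inv <| by
    rw [neg_mul_neg, nonsing_inv_mul _ ((isUnit_iff_isUnit_det _).mp hÃH)]
  rw [inv_fromBlocks_zero₁₂_of_isUnit_iff _ _ _ ⟨fun _ => hÃH.neg, fun _ => hÃ⟩,
    fromCols_mul_fromBlocks, fromCols_mul_fromRows]
  simp only [conjTranspose_add, conjTranspose_mul, conjTranspose_nonsing_inv, Matrix.add_mul,
    Matrix.mul_add, Matrix.mul_assoc, Matrix.neg_mul, Matrix.mul_neg, neg_neg, Matrix.zero_mul,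
    Matrix.mul_zero, hinv]
  abel

theorem det_hamiltonian_mul_det [Fintype q] [DecidableEq q] [Fintype r] {Ã : Matrix p p R}
    {S : Matrix q q R} (B : Matrix p q R) (C : Matrix r p R) (D : Matrix r q R)
    (hÃ : IsUnit Ã) (hS : IsUnit S) :
    (fromBlocks Ã 0 (Cᴴ * C) (-Ãᴴ) + fromRows B (-(Cᴴ * D)) * S⁻¹ * fromCols (Dᴴ * C) Bᴴ).det
        * S.det
      = (S + ((C * Ã⁻¹ * B + D)ᴴ * (C * Ã⁻¹ * B + D) - Dᴴ * D)).det * Ã.det * (-Ãᴴ).det := by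
  have hK : IsUnit (fromBlocks Ã 0 (Cᴴ * C) (-Ãᴴ)) :=
    isUnit_fromBlocks_zero₁₂.mpr ⟨hÃ, hÃ.star.neg⟩
  rw [det_add_mul_inv_mul_mul_det _ _ hK hS, fromCols_mul_inv_fromBlocks_mul_fromRows hÃ,
    det_fromBlocks_zero₁₂, mul_assoc]

end Schur

section OfReal

variable {p q r : Type*}

@[simp] lemma map_ofReal_sub (M N : Matrix p q ℝ) :
    (M - N).map ofReal = M.map ofReal - N.map ofReal :=
  Matrix.map_sub _ ofReal_sub M N

@[simp] lemma map_ofReal_neg (M : Matrix p q ℝ) : (-M).map ofReal = -M.map ofReal :=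
  Matrix.map_neg _ ofReal_neg M

@[simp] lemma map_ofReal_zero : (0 : Matrix p q ℝ).map ofReal = 0 :=
  Matrix.map_zero _ ofReal_zero

@[simp] lemma map_ofReal_one [DecidableEq p] : (1 : Matrix p p ℝ).map ofReal = 1 :=
  Matrix.map_one _ ofReal_zero ofReal_one

@[simp] lemma map_ofReal_smul (c : ℝ) (M : Matrix p q ℝ) :
    (c • M).map ofReal = (c : ℂ) • M.map ofReal :=
  Matrix.map_smulₛₗ _ _ c (fun x => ofReal_mul c x) M

@[simp] lemma map_ofReal_mul [Fintype q] (M : Matrix p q ℝ) (N : Matrix q r ℝ) :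
    (M * N).map ofReal = M.map ofReal * N.map ofReal :=
  Matrix.map_mul (f := ofRealHom)

@[simp] lemma map_ofReal_transpose (M : Matrix p q ℝ) : Mᵀ.map ofReal = (M.map ofReal)ᴴ := by
  ext; simp

lemma det_map_ofReal [Fintype p] [DecidableEq p] (M : Matrix p p ℝ) :
    (M.map ofReal).det = M.det :=
  (RingHom.map_det ofRealHom M).symm

@[simp] lemma map_ofReal_nonsing_inv [Fintype p] [DecidableEq p] (M : Matrix p p ℝ) :
    M⁻¹.map ofReal = (M.map ofReal)⁻¹ :=
  map_nonsing_inv ofRealHom M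

end OfReal

end Matrix

section RealBlocks

variable (D : Matrix (Fin ny) (Fin nu) ℝ) (ξ : ℝ)

lemma mul_Dxi_eq_DxiT_mul : D * Dxi D ξ = DxiT D ξ * D := by
  simp only [Dxi, DxiT, Matrix.mul_sub, Matrix.sub_mul, Matrix.mul_smul, Matrix.smul_mul,
    Matrix.mul_one, Matrix.one_mul, Matrix.mul_assoc]

variable {D ξ}

lemma smul_inv_DxiT (hξ : ξ ≠ 0) (hD : IsUnit (Dxi D ξ)) :
    ξ ^ 2 • (DxiT D ξ)⁻¹ = D * (Dxi D ξ)⁻¹ * Dᵀ - 1 := by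
  have hξ2 : ξ ^ 2 ≠ 0 := pow_ne_zero 2 hξ
  have h : DxiT D ξ * (D * (Dxi D ξ)⁻¹ * Dᵀ - 1) = ξ ^ 2 • 1 := by
    rw [Matrix.mul_sub, ← Matrix.mul_assoc, ← Matrix.mul_assoc, ← mul_Dxi_eq_DxiT_mul,
      mul_nonsing_inv_cancel_right _ _ ((isUnit_iff_isUnit_det _).mp hD), Matrix.mul_one, DxiT,
      sub_sub_cancel]
  have hinv : (DxiT D ξ)⁻¹ = (ξ ^ 2)⁻¹ • (D * (Dxi D ξ)⁻¹ * Dᵀ - 1) := inv_eq_right_inv <| by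
    rw [Matrix.mul_smul, h, smul_smul, inv_mul_cancel₀ hξ2, one_smul]
  rw [hinv, smul_smul, mul_inv_cancel₀ hξ2, one_smul]

lemma Mzero_eq_fromBlocks_sub_mul (A0 : Matrix (Fin n) (Fin n) ℝ)
    (B : Matrix (Fin n) (Fin nu) ℝ) (C : Matrix (Fin ny) (Fin n) ℝ) (hξ : ξ ≠ 0)
    (hD : IsUnit (Dxi D ξ)) :
    Mzero A0 B C D ξ = fromBlocks A0 0 (-(Cᵀ * C)) (-A0ᵀ)
      - fromRows B (-(Cᵀ * D)) * (Dxi D ξ)⁻¹ * fromCols (Dᵀ * C) Bᵀ := by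
  have h₂₁ : ξ ^ 2 • (Cᵀ * (DxiT D ξ)⁻¹ * C) = Cᵀ * D * (Dxi D ξ)⁻¹ * Dᵀ * C - Cᵀ * C := by
    rw [← Matrix.smul_mul, ← Matrix.mul_smul, smul_inv_DxiT hξ hD]
    simp only [Matrix.mul_sub, Matrix.sub_mul, Matrix.mul_one, Matrix.mul_assoc]
  rw [Mzero, h₂₁, fromRows_mul, fromRows_mul_fromCols, eq_sub_iff_add_eq, fromBlocks_add]
  simp only [Matrix.neg_mul, Matrix.mul_assoc]
  congr 1 <;> abel

end RealBlocks

lemma sum_smul_Mpos_add_smul_Mneg (A : Fin m → Matrix (Fin n) (Fin n) ℝ) (a : Fin m → ℂ) :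
    ∑ i : Fin m,
        (a i • (Mpos (A i)).map ofReal + (starRingEnd ℂ) (a i) • (Mneg (A i)).map ofReal)
      = fromBlocks (∑ i, a i • (A i).map ofReal) 0 0
          (-∑ i, (starRingEnd ℂ) (a i) • ((A i).map ofReal)ᴴ) := by
  ext (i | i) (j | j) <;> simp [Mpos, Mneg, Matrix.sum_apply]

lemma neg_conjTranspose_AmatGen (A0 : Matrix (Fin n) (Fin n) ℝ)
    (A : Fin m → Matrix (Fin n) (Fin n) ℝ) (a : Fin m → ℂ) (ω : ℝ) :
    -(AmatGen A0 A a ω)ᴴ = (I * ω) • 1 + (A0.map ofReal)ᴴ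
      + ∑ i, (starRingEnd ℂ) (a i) • ((A i).map ofReal)ᴴ := by
  have : star (I * (ω : ℂ)) = -(I * ω) := by simp
  simp only [AmatGen, conjTranspose_sub, conjTranspose_smul, conjTranspose_one,
    conjTranspose_sum, this, neg_smul]
  abel

lemma HhatGen_eq_fromBlocks_add_mul (A0 : Matrix (Fin n) (Fin n) ℝ)
    (A : Fin m → Matrix (Fin n) (Fin n) ℝ) (B : Matrix (Fin n) (Fin nu) ℝ)
    (C : Matrix (Fin ny) (Fin n) ℝ) (D : Matrix (Fin ny) (Fin nu) ℝ) {ξ : ℝ} (hξ : ξ ≠ 0)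
    (hD : IsUnit (Dxi D ξ)) (a : Fin m → ℂ) (ω : ℝ) :
    HhatGen A0 A B C D ξ a ω =
      fromBlocks (AmatGen A0 A a ω) 0 ((C.map ofReal)ᴴ * C.map ofReal) (-(AmatGen A0 A a ω)ᴴ)
        + fromRows (B.map ofReal) (-((C.map ofReal)ᴴ * D.map ofReal))
          * ((Dxi D ξ).map ofReal)⁻¹
          * fromCols ((D.map ofReal)ᴴ * C.map ofReal) (B.map ofReal)ᴴ := by
  rw [HhatGen, sum_smul_Mpos_add_smul_Mneg, Mzero_eq_fromBlocks_sub_mul A0 B C hξ hD,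
    neg_conjTranspose_AmatGen, AmatGen]
  simp only [map_ofReal_nonsing_inv, map_ofReal_sub, map_ofReal_mul, map_ofReal_neg,
    map_ofReal_transpose, map_ofReal_zero, fromBlocks_map, fromRows_map, fromCols_map]
  rw [← sub_add, add_sub_right_comm, ← fromBlocks_one, fromBlocks_smul]
  congr 1
  simp only [sub_eq_add_neg, fromBlocks_neg, fromBlocks_add, smul_zero, neg_neg, neg_zero,
    add_zero, zero_add]

theorem det_HhatGen_mul_det_Dxi (A0 : Matrix (Fin n) (Fin n) ℝ)
    (A : Fin m → Matrix (Fin n) (Fin n) ℝ) (B : Matrix (Fin n) (Fin nu) ℝ)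
    (C : Matrix (Fin ny) (Fin n) ℝ) (D : Matrix (Fin ny) (Fin nu) ℝ) {ξ : ℝ} (hξ : ξ ≠ 0)
    (hD : IsUnit (Dxi D ξ)) (a : Fin m → ℂ) (ω : ℝ) (hA : IsUnit (AmatGen A0 A a ω)) :
    (HhatGen A0 A B C D ξ a ω).det * ((Dxi D ξ).det : ℂ)
      = ((GmatGen A0 A B C D a ω)ᴴ * GmatGen A0 A B C D a ω - ((ξ : ℂ) ^ 2) • 1).det
          * (AmatGen A0 A a ω).det * (-(AmatGen A0 A a ω)ᴴ).det := by
  have hS : (Dxi D ξ).map ofReal = (D.map ofReal)ᴴ * D.map ofReal - (ξ : ℂ) ^ 2 • 1 := by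
    simp only [Dxi, map_ofReal_sub, map_ofReal_mul, map_ofReal_transpose, map_ofReal_smul,
      map_ofReal_one, ofReal_pow]
  have hDc : IsUnit ((Dxi D ξ).map ofReal) := hD.map ofRealHom.mapMatrix
  rw [HhatGen_eq_fromBlocks_add_mul A0 A B C D hξ hD, ← det_map_ofReal,
    det_hamiltonian_mul_det _ _ _ hA hDc, hS, GmatGen]
  congr 3
  abel

theorem singular_value_iff_det_HhatGen_general
    (A0 : Matrix (Fin n) (Fin n) ℝ) (A : Fin m → Matrix (Fin n) (Fin n) ℝ)
    (B : Matrix (Fin n) (Fin nu) ℝ) (C : Matrix (Fin ny) (Fin n) ℝ)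
    (D : Matrix (Fin ny) (Fin nu) ℝ)
    (ξ : ℝ) (hξ : 0 < ξ) (hD : IsUnit (Dxi D ξ)) (ω : ℝ) (a : Fin m → ℂ)
    (hA : IsUnit (AmatGen A0 A a ω)) :
    (((GmatGen A0 A B C D a ω)ᴴ * GmatGen A0 A B C D a ω - ((ξ : ℂ) ^ 2) • 1).det = 0
        ↔ (HhatGen A0 A B C D ξ a ω).det = 0) ∧
      (HhatGen A0 A B C D ξ a ω).det * ((Dxi D ξ).det : ℂ)
        = ((GmatGen A0 A B C D a ω)ᴴ * GmatGen A0 A B C D a ω - ((ξ : ℂ) ^ 2) • 1).det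
            * (AmatGen A0 A a ω).det * (-(AmatGen A0 A a ω)ᴴ).det := by
  have key := det_HhatGen_mul_det_Dxi A0 A B C D hξ.ne' hD a ω hA
  have hdD : ((Dxi D ξ).det : ℂ) ≠ 0 :=
    ofReal_ne_zero.mpr (isUnit_iff_isUnit_det _ |>.mp hD).ne_zero
  have hdA : (AmatGen A0 A a ω).det ≠ 0 := (isUnit_iff_isUnit_det _ |>.mp hA).ne_zero
  have hdAH : (-(AmatGen A0 A a ω)ᴴ).det ≠ 0 :=
    (isUnit_iff_isUnit_det _ |>.mp hA.star.neg).ne_zero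
  refine ⟨Iff.symm ?_, key⟩
  rw [← mul_eq_zero_iff_right hdD, key, mul_assoc, mul_eq_zero_iff_right (mul_ne_zero hdA hdAH)]

/-- `det(G̃* G̃ − ξ² I) = 0 ↔ det Ĥ = 0`, and moreover
`det Ĥ · det D_ξ = det(G̃* G̃ − ξ² I) · det Ã · det(−Ã*)`. -/
theorem singular_value_iff_det_HhatGen [NeZero n] [NeZero nu] [NeZero ny] [NeZero m]
    (A0 : Matrix (Fin n) (Fin n) ℝ) (A : Fin m → Matrix (Fin n) (Fin n) ℝ)
    (B : Matrix (Fin n) (Fin nu) ℝ) (C : Matrix (Fin ny) (Fin n) ℝ)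
    (D : Matrix (Fin ny) (Fin nu) ℝ) (τ : Fin m → ℝ)
    (ξ : ℝ) (hξ : 0 < ξ) (hD : IsUnit (Dxi D ξ)) (ω : ℝ) (a : Fin m → ℂ)
    (hA : IsUnit (AmatGen A0 A a ω)) :
    (((GmatGen A0 A B C D a ω)ᴴ * GmatGen A0 A B C D a ω - ((ξ : ℂ) ^ 2) • 1).det = 0
        ↔ (HhatGen A0 A B C D ξ a ω).det = 0) ∧
      (HhatGen A0 A B C D ξ a ω).det * ((Dxi D ξ).det : ℂ)
        = ((GmatGen A0 A B C D a ω)ᴴ * GmatGen A0 A B C D a ω - ((ξ : ℂ) ^ 2) • 1).det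
            * (AmatGen A0 A a ω).det * (-(AmatGen A0 A a ω)ᴴ).det :=
  singular_value_iff_det_HhatGen_general A0 A B C D ξ hξ hD ω a hA
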